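/- arXiv:2603.04086 — 4 statements merged into one kernel-verified Lean document; each statement's English description precedes it below -/
import Mathlib

section
/- For p ≥ 2 and f, g ∈ L^p(Ω), the identity ‖w(p,f,g)(f−g)‖_{L²(Ω)}² = ‖f‖_{L^p}^p + (p−1)‖g‖_{L^p}^p − p ∫_Ω |g|^{p−2} g f holds, where w(p,f,g)² = p(p−1)∫_0^1 s |s g + (1−s) f|^{p−2} ds. -/
/-!
Pointwise, the left-hand integrand is the first-order Taylor remainder, in integral form, of
`φ y = |y| ^ p` expanded at `g x` and evaluated at `f x`: indeed `φ' y = p |y| ^ (p - 2) y` and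
`φ'' y = p (p - 1) |y| ^ (p - 2)`, so the remainder `φ (f x) - φ (g x) - φ' (g x) (f x - g x)` is
the right-hand integrand. All three integrals on the right are finite because
`|g| ^ (p - 1) |f| ≤ (max |f| |g|) ^ p ≤ |f| ^ p + |g| ^ p`.
-/

open MeasureTheory Real Filter Topology

theorem abs_rpow_mul_self_mul_self {r : ℝ} (hr : r + 2 ≠ 0) (y : ℝ) :
    |y| ^ r * y * y = |y| ^ (r + 2) := by
  rw [rpow_add' (abs_nonneg y) hr, rpow_two, sq, abs_mul_abs_self, mul_assoc]

theorem abs_rpow_sub_two_mul_abs_mul_abs_le {p : ℝ} (hp : 2 ≤ p) (a b : ℝ) :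
    |b| ^ (p - 2) * |b| * |a| ≤ |a| ^ p + |b| ^ p := by
  set m := max |a| |b|
  have hm : |m| = m := abs_of_nonneg (le_max_of_le_left (abs_nonneg a))
  have ha : |a| ≤ m := le_max_left _ _
  have hb : |b| ≤ m := le_max_right _ _
  have hp2 : 0 ≤ p - 2 := by linarith
  calc |b| ^ (p - 2) * |b| * |a| ≤ m ^ (p - 2) * m * m := by gcongr
    _ = m ^ p := by
        simpa [hm] using abs_rpow_mul_self_mul_self (r := p - 2) (by linarith) m
    _ ≤ |a| ^ p + |b| ^ p := by
        rcases max_choice |a| |b| with h | h <;> simp only [m, h] <;>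
          linarith [rpow_nonneg (abs_nonneg a) p, rpow_nonneg (abs_nonneg b) p]

theorem hasDerivAt_abs_rpow_mul {r : ℝ} (hr : 0 ≤ r) (x : ℝ) :
    HasDerivAt (fun y : ℝ => |y| ^ r * y) ((r + 1) * |x| ^ r) x := by
  rcases eq_or_ne x 0 with rfl | hx
  · have hslope : slope (fun y : ℝ => |y| ^ r * y) 0 =ᶠ[𝓝[≠] 0] fun y => |y| ^ r := by
      filter_upwards [self_mem_nhdsWithin] with y (hy : y ≠ 0)
      simp [slope_def_field, hy]
    have hval : (r + 1) * |(0:ℝ)| ^ r = |(0:ℝ)| ^ r := by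
      rcases hr.eq_or_lt with rfl | hr
      · simp
      · simp [zero_rpow hr.ne']
    rw [hasDerivAt_iff_tendsto_slope, tendsto_congr' hslope, hval]
    exact ((continuous_abs.rpow_const fun _ => Or.inr hr).tendsto 0).mono_left
      nhdsWithin_le_nhds
  · have hx' : |x| ≠ 0 := abs_ne_zero.2 hx
    refine (((hasDerivAt_abs hx).rpow_const (Or.inl hx')).mul (hasDerivAt_id' x)).congr_deriv ?_
    have hpow : |x| ^ (r - 1) * |x| = |x| ^ r := by rw [rpow_sub_one hx', div_mul_cancel₀ _ hx']
    linear_combination r * |x| ^ (r - 1) * sign_mul_self x + r * hpow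

theorem sub_sub_deriv_mul_eq_integral_mul_sq {φ φ' φ'' : ℝ → ℝ}
    (hφ : ∀ x, HasDerivAt φ (φ' x) x) (hφ' : ∀ x, HasDerivAt φ' (φ'' x) x)
    (hφ'' : Continuous φ'') (x₀ x : ℝ) :
    φ x - φ x₀ - φ' x₀ * (x - x₀) =
      (∫ s in (0:ℝ)..1, s * φ'' (s * x₀ + (1 - s) * x)) * (x - x₀) ^ 2 := by
  set u : ℝ → ℝ := fun s => s * x₀ + (1 - s) * x
  have hu : ∀ s, HasDerivAt u (x₀ - x) s := fun s =>
    (((hasDerivAt_id' s).mul_const x₀).add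
      (((hasDerivAt_id' s).const_sub 1).mul_const x)).congr_deriv (by ring)
  have hF : ∀ s, HasDerivAt (fun s => s * φ' (u s) * (x₀ - x) - φ (u s))
      (s * φ'' (u s) * (x - x₀) ^ 2) s := fun s =>
    ((((hasDerivAt_id' s).mul ((hφ' (u s)).comp s (hu s))).mul_const (x₀ - x)).sub
      ((hφ (u s)).comp s (hu s))).congr_deriv (by simp only [Function.comp_apply]; ring)
  have hcont : Continuous fun s => s * φ'' (u s) * (x - x₀) ^ 2 := by
    have : Continuous u := by fun_prop
    fun_prop
  rw [← intervalIntegral.integral_mul_const,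
    intervalIntegral.integral_eq_sub_of_hasDerivAt (fun s _ => hF s) (hcont.intervalIntegrable 0 1)]
  simp only [u]
  ring_nf

theorem mul_integral_abs_rpow_mul_sq_eq {p : ℝ} (hp : 2 ≤ p) (a b : ℝ) :
    (p * (p - 1) * ∫ s in Set.Ioo (0:ℝ) 1, s * |s * b + (1 - s) * a| ^ (p - 2)) * (a - b) ^ 2
      = |a| ^ p + (p - 1) * |b| ^ p - p * (|b| ^ (p - 2) * b * a) := by
  have hφ (x : ℝ) : HasDerivAt (fun y : ℝ => |y| ^ p) (p * (|x| ^ (p - 2) * x)) x :=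
    (hasDerivAt_abs_rpow x (by linarith)).congr_deriv (mul_assoc ..)
  have hφ' (x : ℝ) : HasDerivAt (fun y : ℝ => p * (|y| ^ (p - 2) * y))
      (p * (p - 1) * |x| ^ (p - 2)) x :=
    ((hasDerivAt_abs_rpow_mul (by linarith) x).const_mul p).congr_deriv (by ring)
  have hφ'' : Continuous fun y : ℝ => p * (p - 1) * |y| ^ (p - 2) :=
    continuous_const.mul (continuous_abs.rpow_const fun _ => Or.inr (by linarith))
  have taylor := sub_sub_deriv_mul_eq_integral_mul_sq hφ hφ' hφ'' b a
  have hb := abs_rpow_mul_self_mul_self (r := p - 2) (by linarith) b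
  rw [intervalIntegral.integral_of_le zero_le_one] at taylor
  simp only [mul_left_comm _ (p * (p - 1)), integral_const_mul] at taylor
  rw [sub_add_cancel] at hb
  rw [← integral_Ioc_eq_integral_Ioo]
  linear_combination -taylor + p * hb

theorem MeasureTheory.MemLp.integrable_abs_rpow {α : Type*} [MeasurableSpace α]
    {μ : Measure α} {p : ℝ} (hp : 0 < p) {f : α → ℝ} (hf : MemLp f (ENNReal.ofReal p) μ) :
    Integrable (fun x => |f x| ^ p) μ := by
  simpa [ENNReal.toReal_ofReal hp.le] using
    hf.integrable_norm_rpow (by simpa using hp) ENNReal.ofReal_ne_top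

theorem MeasureTheory.MemLp.integrable_abs_rpow_sub_two_mul_mul {α : Type*} [MeasurableSpace α]
    {μ : Measure α} {p : ℝ} (hp : 2 ≤ p) {f g : α → ℝ} (hf : MemLp f (ENNReal.ofReal p) μ)
    (hg : MemLp g (ENNReal.ofReal p) μ) :
    Integrable (fun x => |g x| ^ (p - 2) * g x * f x) μ := by
  refine Integrable.mono' ((hf.integrable_abs_rpow (by linarith)).add
    (hg.integrable_abs_rpow (by linarith))) ?_ (ae_of_all _ fun x => ?_)
  · have := hf.aestronglyMeasurable
    have := hg.aestronglyMeasurable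
    fun_prop (disch := linarith)
  · simpa only [Pi.add_apply, norm_mul, norm_eq_abs, abs_abs,
      abs_of_nonneg (rpow_nonneg (abs_nonneg _) _)] using
      abs_rpow_sub_two_mul_abs_mul_abs_le hp (f x) (g x)

theorem lp_identity_general {N : ℕ} (Ω : Set (Fin N → ℝ))
    (p : ℝ) (hp : 2 ≤ p) (f g : (Fin N → ℝ) → ℝ)
    (hf : MemLp f (ENNReal.ofReal p) (volume.restrict Ω))
    (hg : MemLp g (ENNReal.ofReal p) (volume.restrict Ω)) :
    ∫ x in Ω, (p * (p - 1) *
        ∫ s in Set.Ioo (0:ℝ) 1, s * |s * g x + (1 - s) * f x| ^ (p - 2)) *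
        (f x - g x) ^ 2
      = (∫ x in Ω, |f x| ^ p) + (p - 1) * (∫ x in Ω, |g x| ^ p)
        - p * ∫ x in Ω, |g x| ^ (p - 2) * g x * f x := by
  have hIf := hf.integrable_abs_rpow (by linarith)
  have hIg := hg.integrable_abs_rpow (by linarith)
  have hcross := hf.integrable_abs_rpow_sub_two_mul_mul hp hg
  rw [integral_congr_ae (ae_of_all _ fun x => mul_integral_abs_rpow_mul_sq_eq hp (f x) (g x)),
    integral_sub (hIf.fun_add (hIg.const_mul _)) (hcross.const_mul _),
    integral_add hIf (hIg.const_mul _), integral_const_mul, integral_const_mul]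

/-- Proposition 2.1 in [DA]: the fundamental $L^p$ identity. -/
theorem lp_identity {N : ℕ} (Ω : Set (Fin N → ℝ)) (hΩ : MeasurableSet Ω)
    (p : ℝ) (hp : 2 ≤ p) (f g : (Fin N → ℝ) → ℝ)
    (hf : MemLp f (ENNReal.ofReal p) (volume.restrict Ω))
    (hg : MemLp g (ENNReal.ofReal p) (volume.restrict Ω)) :
    ∫ x in Ω, (p * (p - 1) *
        ∫ s in Set.Ioo (0:ℝ) 1, s * |s * g x + (1 - s) * f x| ^ (p - 2)) *
        (f x - g x) ^ 2
      = (∫ x in Ω, |f x| ^ p) + (p - 1) * (∫ x in Ω, |g x| ^ p)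
        - p * ∫ x in Ω, |g x| ^ (p - 2) * g x * f x :=
  lp_identity_general Ω p hp f g hf hg
end

section
/- For real numbers a, b with p ≥ 2, the pointwise identity |a|^p + (p−1)|b|^p − p |b|^{p−2} b a = p(p−1) (a−b)² ∫_0^1 s |s b + (1−s) a|^{p−2} ds holds; in particular the left-hand side is nonnegative, with equality if and only if a = b. -/
/-!
Put `γ s = s * b + (1 - s) * a` and `g = |γ|^p`. The left-hand side is `g 0 - g 1 + g' 1`, which
integration by parts turns into `∫₀¹ s g''(s) ds`. For `p ≥ 2` the map `x ↦ |x|^(p-2) x` is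
differentiable everywhere with derivative `(p-1)|x|^(p-2)`, so `g'' = p(p-1)(a-b)²|γ|^(p-2) ≥ 0`.
When `a ≠ b`, `γ` vanishes at most once, so the integral is positive.
-/

open Real Set MeasureTheory

theorem abs_rpow_sub_two_mul_self {p : ℝ} (hp : 2 ≤ p) (x : ℝ) :
    |x| ^ (p - 2) * x * x = |x| ^ p := by
  rcases eq_or_ne x 0 with rfl | hx
  · simp [zero_rpow (by linarith : p ≠ 0)]
  · rw [mul_assoc, ← sq, ← sq_abs, ← rpow_two, ← rpow_add (abs_pos.mpr hx)]
    ring_nf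

theorem hasDerivAt_abs_rpow_sub_two_mul {p : ℝ} (hp : 2 ≤ p) (x : ℝ) :
    HasDerivAt (fun y : ℝ => |y| ^ (p - 2) * y) ((p - 1) * |x| ^ (p - 2)) x := by
  rcases hp.eq_or_lt with rfl | hp
  · norm_num; exact hasDerivAt_id' x
  rcases eq_or_ne x 0 with rfl | hx
  · have hzero : |(0 : ℝ)| ^ (p - 2) = 0 := by simp [zero_rpow (by linarith : p - 2 ≠ 0)]
    rw [hzero, mul_zero, hasDerivAt_iff_tendsto_slope]
    -- the slope at `0` is `|y| ^ (p - 2)`, which tends to `0` because `p > 2`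
    have hcont : Continuous (fun y : ℝ => |y| ^ (p - 2)) :=
      continuous_abs.rpow_const fun _ => Or.inr (by linarith)
    refine ((hzero ▸ hcont.tendsto 0).mono_left nhdsWithin_le_nhds).congr' ?_
    filter_upwards [self_mem_nhdsWithin] with y (hy : y ≠ 0)
    simp [slope_def_field, hy]
  · have habs := (hasDerivAt_abs hx).rpow_const (p := p - 2) (Or.inl (abs_ne_zero.mpr hx))
    have hsign : (SignType.sign x : ℝ) * x = |x| := by
      rcases hx.lt_or_gt with h | h <;> simp [h, abs_of_neg, abs_of_pos]
    have hpow : |x| ^ (p - 2 - 1) * |x| = |x| ^ (p - 2) := by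
      rw [← rpow_add_one (abs_ne_zero.mpr hx)]; ring_nf
    refine (habs.mul (hasDerivAt_id' x)).congr_deriv ?_
    linear_combination |x| ^ (p - 2 - 1) * (p - 2) * hsign + (p - 2) * hpow

theorem integral_sub_mul_deriv2_eq {g g' g'' : ℝ → ℝ} {a b : ℝ}
    (hg : ∀ s ∈ uIcc a b, HasDerivAt g (g' s) s)
    (hg' : ∀ s ∈ uIcc a b, HasDerivAt g' (g'' s) s)
    (hg'' : IntervalIntegrable g'' volume a b) :
    ∫ s in a..b, (s - a) * g'' s = (b - a) * g' b - (g b - g a) := by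
  have hg'_int : IntervalIntegrable g' volume a b :=
    (ContinuousOn.intervalIntegrable fun s hs => (hg' s hs).continuousAt.continuousWithinAt)
  have hparts := intervalIntegral.integral_mul_deriv_eq_deriv_mul
    (fun s _ => (hasDerivAt_id s).sub_const a) hg' intervalIntegrable_const hg''
  simp only [id, sub_self, zero_mul, sub_zero, one_mul] at hparts
  rw [hparts, intervalIntegral.integral_eq_sub_of_hasDerivAt hg hg'_int]

theorem integral_Ioo_pos_of_continuous {f : ℝ → ℝ} {a b x : ℝ} (hf : Continuous f)
    (hf_nonneg : ∀ y ∈ Ioo a b, 0 ≤ f y) (hx : x ∈ Ioo a b) (hfx : f x ≠ 0) :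
    0 < ∫ y in Ioo a b, f y := by
  rw [setIntegral_pos_iff_support_of_nonneg_ae ((ae_restrict_iff' measurableSet_Ioo).mpr
      (.of_forall hf_nonneg)) (hf.integrableOn_Icc.mono_set Ioo_subset_Icc_self)]
  exact (hf.isOpen_support.inter isOpen_Ioo).measure_pos volume ⟨x, hfx, hx⟩

theorem abs_rpow_sub_tangent_eq_integral {p : ℝ} (hp : 2 ≤ p) (a b : ℝ) :
    |a| ^ p + (p - 1) * |b| ^ p - p * (|b| ^ (p - 2) * b) * a
      = p * (p - 1) * (a - b) ^ 2 *
        ∫ s in Ioo (0 : ℝ) 1, s * |s * b + (1 - s) * a| ^ (p - 2) := by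
  set γ : ℝ → ℝ := fun s => s * b + (1 - s) * a
  have hγ (s : ℝ) : HasDerivAt γ (b - a) s :=
    ((hasDerivAt_id' s).mul_const b |>.add <| (hasDerivAt_id' s).const_sub 1 |>.mul_const a)
      |>.congr_deriv (by ring)
  have hg (s : ℝ) : HasDerivAt (fun t => |γ t| ^ p) (p * (|γ s| ^ (p - 2) * γ s) * (b - a)) s :=
    ((hasDerivAt_abs_rpow _ (by linarith)).comp s (hγ s)).congr_deriv (by ring)
  have hg' (s : ℝ) : HasDerivAt (fun t => p * (|γ t| ^ (p - 2) * γ t) * (b - a))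
      (p * (p - 1) * (a - b) ^ 2 * |γ s| ^ (p - 2)) s :=
    (((hasDerivAt_abs_rpow_sub_two_mul hp _).comp s (hγ s)).const_mul p |>.mul_const _).congr_deriv
      (by ring)
  have hcont : Continuous fun s => p * (p - 1) * (a - b) ^ 2 * |γ s| ^ (p - 2) := by
    have : Continuous γ := by fun_prop
    exact continuous_const.mul (this.abs.rpow_const fun _ => Or.inr (by linarith))
  have htaylor := integral_sub_mul_deriv2_eq (a := 0) (b := 1) (fun s _ => hg s) (fun s _ => hg' s)
    (hcont.intervalIntegrable 0 1)
  simp only [sub_zero, γ, one_mul, zero_mul, sub_self, add_zero, zero_add] at htaylor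
  rw [intervalIntegral.integral_of_le zero_le_one, integral_Ioc_eq_integral_Ioo] at htaylor
  simp_rw [mul_left_comm _ (p * (p - 1) * (a - b) ^ 2), integral_const_mul] at htaylor
  rw [htaylor]
  linear_combination -p * abs_rpow_sub_two_mul_self hp b

theorem integral_mul_abs_lineMap_rpow_pos {q : ℝ} (hq : 0 ≤ q) {a b : ℝ} (hab : a ≠ b) :
    0 < ∫ s in Ioo (0 : ℝ) 1, s * |s * b + (1 - s) * a| ^ q := by
  obtain ⟨x, hx, hγx⟩ : ∃ x ∈ Ioo (0 : ℝ) 1, x * b + (1 - x) * a ≠ 0 := by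
    by_contra! h
    have h₁ := h (1 / 4) (by norm_num)
    have h₂ := h (1 / 2) (by norm_num)
    exact hab (by linarith)
  refine integral_Ioo_pos_of_continuous (x := x) ?_ (fun s hs => by have := hs.1; positivity) hx
    (mul_pos hx.1 (rpow_pos_of_pos (abs_pos.mpr hγx) q)).ne'
  have hγ : Continuous fun s : ℝ => s * b + (1 - s) * a := by fun_prop
  exact continuous_id.mul (hγ.abs.rpow_const fun _ => Or.inr hq)

/-- Pointwise version of the fundamental $L^p$ identity: for `p ≥ 2` and real `a, b`,
`|a|^p + (p-1)|b|^p - p|b|^{p-2}b a = p(p-1)(a-b)^2 ∫₀¹ s|sb+(1-s)a|^{p-2} ds`,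
the left-hand side is nonnegative, and it vanishes iff `a = b`. -/
theorem pointwise_lp_identity (p : ℝ) (hp : 2 ≤ p) (a b : ℝ) :
    |a| ^ p + (p - 1) * |b| ^ p - p * (|b| ^ (p - 2) * b) * a
      = p * (p - 1) * (a - b) ^ 2 *
        ∫ s in Set.Ioo (0:ℝ) 1, s * |s * b + (1 - s) * a| ^ (p - 2)
    ∧ 0 ≤ |a| ^ p + (p - 1) * |b| ^ p - p * (|b| ^ (p - 2) * b) * a
    ∧ (|a| ^ p + (p - 1) * |b| ^ p - p * (|b| ^ (p - 2) * b) * a = 0 ↔ a = b) := by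
  have hid := abs_rpow_sub_tangent_eq_integral hp a b
  have hcoeff : 0 < p * (p - 1) := by nlinarith
  have hint : 0 ≤ ∫ s in Ioo (0 : ℝ) 1, s * |s * b + (1 - s) * a| ^ (p - 2) :=
    setIntegral_nonneg measurableSet_Ioo fun s hs => by have := hs.1; positivity
  refine ⟨hid, hid ▸ by positivity, ⟨fun hzero => ?_, fun hab => ?_⟩⟩
  · by_contra hab
    have hsub : a - b ≠ 0 := sub_ne_zero.mpr hab
    have hpos := integral_mul_abs_lineMap_rpow_pos (by linarith : 0 ≤ p - 2) hab
    exact (hid ▸ hzero).not_gt (by positivity)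
  · subst hab
    linear_combination -p * abs_rpow_sub_two_mul_self hp a
end

section
/- Let Q > 2, p ≥ 2, θ ∈ ℝ, and define h(λ) = (1+λ²)^{−1/2} [ (Q/(Q−2))² + (pθ(pθ−2Q)/(Q−2)²) λ²/(1+λ²) ] for λ ∈ ℝ. If pθ ∈ [(1−√(3/2))Q, (1+√(3/2))Q], then sup_{λ∈ℝ} h(λ) = (Q/(Q−2))², attained at λ = 0. -/
open Real

/-!
Write `a = (Q/(Q-2))²` and `b = pθ(pθ-2Q)/(Q-2)²`. The hypothesis on `pθ` says exactly that
`2b ≤ a`, since `(1 ± √(3/2))Q` are the roots of `2x(x - 2Q) = Q²`. With `s = √(1+λ²) ≥ 1`,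
this bounds `h(λ) = (a + b(1 - 1/s²))/s` by `a(3s² - 1)/(2s³)`, and `2s³ - 3s² + 1 = (s-1)²(2s+1) ≥ 0`.
-/

lemma two_mul_mul_sub_le_sq {Q x : ℝ} (h1 : (1 - √(3/2)) * Q ≤ x)
    (h2 : x ≤ (1 + √(3/2)) * Q) : 2 * (x * (x - 2 * Q)) ≤ Q ^ 2 := by
  have hr : √(3/2) ^ 2 = 3/2 := Real.sq_sqrt (by norm_num)
  nlinarith [mul_nonneg (sub_nonneg.mpr h1) (sub_nonneg.mpr h2)]

lemma one_div_sqrt_one_add_sq_mul_le {a b : ℝ} (ha : 0 ≤ a) (hb : 2 * b ≤ a) (l : ℝ) :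
    1 / √(1 + l ^ 2) * (a + b * (l ^ 2 / (1 + l ^ 2))) ≤ a := by
  set s := √(1 + l ^ 2)
  have hs2 : s ^ 2 = 1 + l ^ 2 := Real.sq_sqrt (by positivity)
  have hs : 1 ≤ s := Real.one_le_sqrt.mpr (by nlinarith [sq_nonneg l])
  have hl : l ^ 2 = s ^ 2 - 1 := by linarith
  have hcubic : 3 * s ^ 2 - 1 ≤ 2 * s ^ 3 := by
    nlinarith [mul_nonneg (sq_nonneg (s - 1)) (by linarith : (0 : ℝ) ≤ 2 * s + 1)]
  rw [← hs2]
  calc 1 / s * (a + b * (l ^ 2 / s ^ 2))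
      ≤ 1 / s * (a + a / 2 * (l ^ 2 / s ^ 2)) := by gcongr; linarith
    _ = a * ((3 * s ^ 2 - 1) / (2 * s ^ 3)) := by rw [hl]; field_simp; ring
    _ ≤ a := mul_le_of_le_one_right ha ((div_le_one (by positivity)).mpr hcubic)

theorem koranyi_weight_sup_general (Q p θ : ℝ) (hQ : 2 < Q)
    (h1 : (1 - Real.sqrt (3/2)) * Q ≤ p * θ)
    (h2 : p * θ ≤ (1 + Real.sqrt (3/2)) * Q) :
    (fun l : ℝ => (1 / Real.sqrt (1 + l ^ 2)) *
        ((Q / (Q - 2)) ^ 2 +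
          (p * θ * (p * θ - 2 * Q) / (Q - 2) ^ 2) * (l ^ 2 / (1 + l ^ 2)))) 0
      = (Q / (Q - 2)) ^ 2
    ∧ ∀ l : ℝ, (1 / Real.sqrt (1 + l ^ 2)) *
        ((Q / (Q - 2)) ^ 2 +
          (p * θ * (p * θ - 2 * Q) / (Q - 2) ^ 2) * (l ^ 2 / (1 + l ^ 2)))
      ≤ (Q / (Q - 2)) ^ 2 := by
  refine ⟨by norm_num, one_div_sqrt_one_add_sq_mul_le (sq_nonneg _) ?_⟩
  have hd : 0 < (Q - 2) ^ 2 := by nlinarith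
  rw [div_pow, ← mul_div_assoc, div_le_div_iff_of_pos_right hd]
  exact two_mul_mul_sub_le_sq h1 h2

/-- Maximization of `h(λ) = (1+λ²)^{-1/2}[(Q/(Q-2))² + (pθ(pθ-2Q)/(Q-2)²) λ²/(1+λ²)]`:
if `pθ ∈ [(1-√(3/2))Q, (1+√(3/2))Q]`, the supremum is `(Q/(Q-2))²`, attained at `λ = 0`. -/
theorem koranyi_weight_sup (Q p θ : ℝ) (hQ : 2 < Q) (hp : 2 ≤ p)
    (h1 : (1 - Real.sqrt (3/2)) * Q ≤ p * θ)
    (h2 : p * θ ≤ (1 + Real.sqrt (3/2)) * Q) :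
    (fun l : ℝ => (1 / Real.sqrt (1 + l ^ 2)) *
        ((Q / (Q - 2)) ^ 2 +
          (p * θ * (p * θ - 2 * Q) / (Q - 2) ^ 2) * (l ^ 2 / (1 + l ^ 2)))) 0
      = (Q / (Q - 2)) ^ 2
    ∧ ∀ l : ℝ, (1 / Real.sqrt (1 + l ^ 2)) *
        ((Q / (Q - 2)) ^ 2 +
          (p * θ * (p * θ - 2 * Q) / (Q - 2) ^ 2) * (l ^ 2 / (1 + l ^ 2)))
      ≤ (Q / (Q - 2)) ^ 2 :=
  koranyi_weight_sup_general Q p θ hQ h1 h2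
end

section
/- Let Q > 2, p ≥ 2, θ ≥ 0 with Q ≥ 4pθ/(12−π²), and define on [−2π,2π] the function g(ν) = 2(Q/(Q−2))² (1−cos ν)/ν² + (2pθ/(Q−2))² ((ν−sin ν)/ν²)² − (4pθQ/(Q−2)²) ((ν−sin ν)/ν²)((1−cos ν)/ν), extended continuously at ν=0 by g(0) = (Q/(Q−2))². Then sup_{ν∈[−2π,2π]} g(ν) = (Q/(Q−2))², attained at ν = 0. -/
/-!
With `B = 2pθ`, for `ν ≠ 0` we have
`(Q-2)²ν⁴ g(ν) = 2Q²ν²(1 - cos ν) + B²(ν - sin ν)² - 2BQν(ν - sin ν)(1 - cos ν)`.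
For `ν > 0` the last term is nonpositive and the hypothesis reads `2B ≤ (12 - π²)Q`, so
`g(ν) ≤ g(0)` reduces to `(12 - π²)²(ν - sin ν)² ≤ 4(ν⁴ - 2ν²(1 - cos ν))`. Both sides are
`O(ν⁶)` at `0`; up to `ν = 4` they are compared through the degree-six Taylor bounds of `sin`
and `cos`, and beyond `4` the bounds `|sin ν|, |cos ν| ≤ 1` suffice. Negative `ν` follow since
`g` is even.
-/

open Real

/-- The function `g` appearing in the Carnot–Carathéodory bound in the Heisenberg group,
extended by continuity at `ν = 0` by `g(0) = (Q/(Q-2))²`. -/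
noncomputable def gCC (Q p θ : ℝ) (ν : ℝ) : ℝ :=
  if ν = 0 then (Q / (Q - 2)) ^ 2
  else
    2 * (Q / (Q - 2)) ^ 2 * ((1 - Real.cos ν) / ν ^ 2)
      + (2 * p * θ / (Q - 2)) ^ 2 * ((ν - Real.sin ν) / ν ^ 2) ^ 2
      - (4 * p * θ * Q / (Q - 2) ^ 2) * ((ν - Real.sin ν) / ν ^ 2) * ((1 - Real.cos ν) / ν)

lemma apply_zero_le_of_hasDerivAt_nonneg {f f' : ℝ → ℝ} (hf : ∀ y, HasDerivAt f (f' y) y)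
    (hf' : ∀ y, 0 ≤ y → 0 ≤ f' y) {x : ℝ} (hx : 0 ≤ x) : f 0 ≤ f x := by
  have hmono : MonotoneOn f (Set.Ici 0) :=
    monotoneOn_of_hasDerivWithinAt_nonneg (convex_Ici 0)
      (fun y _ ↦ (hf y).continuousAt.continuousWithinAt)
      (fun y _ ↦ (hf y).hasDerivWithinAt)
      (fun y hy ↦ hf' y (interior_subset hy))
  exact hmono Set.self_mem_Ici hx hx

namespace Real

variable {x : ℝ}

lemma cos_le_one_sub_sq_div_two_add_quartic (hx : 0 ≤ x) :
    cos x ≤ 1 - x ^ 2 / 2 + x ^ 4 / 24 := by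
  have h := apply_zero_le_of_hasDerivAt_nonneg
    (f := fun y ↦ 1 - y ^ 2 / 2 + y ^ 4 / 24 - cos y) (f' := fun y ↦ sin y - (y - y ^ 3 / 6))
    (fun y ↦ by
      refine (((((hasDerivAt_pow 2 y).div_const 2).const_sub 1).add
        ((hasDerivAt_pow 4 y).div_const 24)).sub (hasDerivAt_cos y)).congr_deriv ?_
      ring)
    (fun y hy ↦ sub_nonneg.2 (sin_ge_sub_cube hy)) hx
  simp only [cos_zero] at h
  linarith

lemma sin_le_sub_cube_add_quintic (hx : 0 ≤ x) : sin x ≤ x - x ^ 3 / 6 + x ^ 5 / 120 := by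
  have h := apply_zero_le_of_hasDerivAt_nonneg
    (f := fun y ↦ y - y ^ 3 / 6 + y ^ 5 / 120 - sin y)
    (f' := fun y ↦ 1 - y ^ 2 / 2 + y ^ 4 / 24 - cos y)
    (fun y ↦ by
      refine ((((hasDerivAt_id y).sub ((hasDerivAt_pow 3 y).div_const 6)).add
        ((hasDerivAt_pow 5 y).div_const 120)).sub (hasDerivAt_sin y)).congr_deriv ?_
      ring)
    (fun y hy ↦ sub_nonneg.2 (cos_le_one_sub_sq_div_two_add_quartic hy)) hx
  simp only [sin_zero] at h
  linarith

lemma one_sub_sq_div_two_add_quartic_sub_sextic_le_cos (hx : 0 ≤ x) :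
    1 - x ^ 2 / 2 + x ^ 4 / 24 - x ^ 6 / 720 ≤ cos x := by
  have h := apply_zero_le_of_hasDerivAt_nonneg
    (f := fun y ↦ cos y - 1 + y ^ 2 / 2 - y ^ 4 / 24 + y ^ 6 / 720)
    (f' := fun y ↦ y - y ^ 3 / 6 + y ^ 5 / 120 - sin y)
    (fun y ↦ by
      refine (((((hasDerivAt_cos y).sub_const 1).add ((hasDerivAt_pow 2 y).div_const 2)).sub
        ((hasDerivAt_pow 4 y).div_const 24)).add
          ((hasDerivAt_pow 6 y).div_const 720)).congr_deriv ?_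
      ring)
    (fun y hy ↦ sub_nonneg.2 (sin_le_sub_cube_add_quintic hy)) hx
  simp only [cos_zero] at h
  linarith

end Real

lemma twelve_sub_pi_sq_mem_Ioo : 12 - π ^ 2 ∈ Set.Ioo 0 2.14 := by
  have := pi_gt_d6
  have := pi_lt_d2
  constructor <;> nlinarith

lemma twelve_sub_pi_sq_sq_mul_sub_sin_sq_le {ν : ℝ} (hν₀ : 0 ≤ ν) :
    (12 - π ^ 2) ^ 2 * (ν - sin ν) ^ 2 ≤ 4 * (ν ^ 4 - 2 * ν ^ 2 * (1 - cos ν)) := by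
  obtain ⟨hc₀, hc₁⟩ := twelve_sub_pi_sq_mem_Ioo
  have hc : (12 - π ^ 2) ^ 2 ≤ 4.58 := by nlinarith
  have ht₀ : 0 ≤ ν - sin ν := sub_nonneg.2 (sin_le hν₀)
  rcases le_total ν 4 with hν₄ | hν₄
  · have ht : (ν - sin ν) ^ 2 ≤ (ν ^ 3 / 6) ^ 2 :=
      pow_le_pow_left₀ ht₀ (by linarith [sin_ge_sub_cube hν₀]) 2
    have hcos := one_sub_sq_div_two_add_quartic_sub_sextic_le_cos hν₀
    have hν₂ : ν ^ 2 ≤ 16 := by nlinarith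
    calc (12 - π ^ 2) ^ 2 * (ν - sin ν) ^ 2 ≤ 4.58 * (ν ^ 3 / 6) ^ 2 := by gcongr
      _ ≤ 4 * (ν ^ 6 / 12 - ν ^ 8 / 360) := by nlinarith
      _ ≤ 4 * (ν ^ 4 - 2 * ν ^ 2 * (1 - cos ν)) := by nlinarith
  · have ht : (ν - sin ν) ^ 2 ≤ (ν + 1) ^ 2 :=
      pow_le_pow_left₀ ht₀ (by linarith [neg_one_le_sin ν]) 2
    have hν₂ : 16 ≤ ν ^ 2 := by nlinarith
    calc (12 - π ^ 2) ^ 2 * (ν - sin ν) ^ 2 ≤ 4.58 * (ν + 1) ^ 2 := by gcongr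
      _ ≤ 4 * (ν ^ 4 - 4 * ν ^ 2) := by nlinarith
      _ ≤ 4 * (ν ^ 4 - 2 * ν ^ 2 * (1 - cos ν)) := by nlinarith [neg_one_le_cos ν]

lemma gCC_zero (Q p θ : ℝ) : gCC Q p θ 0 = (Q / (Q - 2)) ^ 2 := if_pos rfl

lemma gCC_neg (Q p θ ν : ℝ) : gCC Q p θ (-ν) = gCC Q p θ ν := by
  by_cases hν : ν = 0
  · rw [hν, neg_zero]
  · rw [gCC, gCC, if_neg (neg_ne_zero.2 hν), if_neg hν, sin_neg, cos_neg]
    ring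

lemma gCC_eq_div (Q p θ : ℝ) {ν : ℝ} (hν : ν ≠ 0) :
    gCC Q p θ ν = (2 * Q ^ 2 * ν ^ 2 * (1 - cos ν) + (2 * p * θ) ^ 2 * (ν - sin ν) ^ 2
      - 2 * (2 * p * θ) * Q * (ν - sin ν) * (1 - cos ν) * ν) / ((Q - 2) ^ 2 * ν ^ 4) := by
  rw [gCC, if_neg hν]
  by_cases hQ : Q - 2 = 0
  · simp [hQ]
  · field_simp
    ring

lemma gCC_le_of_pos {Q p θ ν : ℝ} (hp : 0 ≤ p) (hθ : 0 ≤ θ)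
    (hQθ : 4 * p * θ ≤ Q * (12 - π ^ 2)) (hν : 0 < ν) :
    gCC Q p θ ν ≤ (Q / (Q - 2)) ^ 2 := by
  set B := 2 * p * θ
  have hB : 0 ≤ B := by positivity
  have hBQ : 2 * B ≤ Q * (12 - π ^ 2) := by linarith
  have hQ : 0 ≤ Q := nonneg_of_mul_nonneg_left (by linarith) twelve_sub_pi_sq_mem_Ioo.1
  have ht : 0 ≤ ν - sin ν := sub_nonneg.2 (sin_le hν.le)
  have hc : 0 ≤ 1 - cos ν := sub_nonneg.2 (cos_le_one ν)
  have hB2 : (2 * B) ^ 2 ≤ (Q * (12 - π ^ 2)) ^ 2 := pow_le_pow_left₀ (by positivity) hBQ 2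
  have hcross : 0 ≤ 2 * B * Q * (ν - sin ν) * (1 - cos ν) * ν := by positivity
  have hnum : 2 * Q ^ 2 * ν ^ 2 * (1 - cos ν) + B ^ 2 * (ν - sin ν) ^ 2
      - 2 * B * Q * (ν - sin ν) * (1 - cos ν) * ν ≤ Q ^ 2 * ν ^ 4 := by
    nlinarith [mul_le_mul_of_nonneg_right hB2 (sq_nonneg (ν - sin ν)),
      mul_le_mul_of_nonneg_left (twelve_sub_pi_sq_sq_mul_sub_sin_sq_le hν.le) (sq_nonneg Q)]
  calc gCC Q p θ ν ≤ Q ^ 2 * ν ^ 4 / ((Q - 2) ^ 2 * ν ^ 4) := by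
        rw [gCC_eq_div Q p θ hν.ne']
        gcongr
    _ = (Q / (Q - 2)) ^ 2 := by
        rw [mul_div_mul_right _ _ (by positivity), div_pow]

theorem gCC_sup_general (Q p θ : ℝ) (hp : 2 ≤ p) (hθ : 0 ≤ θ)
    (hQθ : 4 * p * θ ≤ Q * (12 - Real.pi ^ 2)) :
    gCC Q p θ 0 = (Q / (Q - 2)) ^ 2
    ∧ ∀ ν ∈ Set.Icc (-(2 * Real.pi)) (2 * Real.pi), gCC Q p θ ν ≤ gCC Q p θ 0 := by
  refine ⟨gCC_zero Q p θ, fun ν _ ↦ ?_⟩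
  rw [gCC_zero]
  have hp₀ : 0 ≤ p := by linarith
  rcases lt_trichotomy ν 0 with hν | rfl | hν
  · rw [← gCC_neg]
    exact gCC_le_of_pos hp₀ hθ hQθ (neg_pos.2 hν)
  · exact (gCC_zero Q p θ).le
  · exact gCC_le_of_pos hp₀ hθ hQθ hν

/-- If `Q > 2`, `p ≥ 2`, `θ ≥ 0` and `Q(12 - π²) ≥ 4pθ`, then the supremum of `g`
on `[-2π, 2π]` is `(Q/(Q-2))²`, attained at `ν = 0`. -/
theorem gCC_sup (Q p θ : ℝ) (hQ : 2 < Q) (hp : 2 ≤ p) (hθ : 0 ≤ θ)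
    (hQθ : 4 * p * θ ≤ Q * (12 - Real.pi ^ 2)) :
    gCC Q p θ 0 = (Q / (Q - 2)) ^ 2
    ∧ ∀ ν ∈ Set.Icc (-(2 * Real.pi)) (2 * Real.pi), gCC Q p θ ν ≤ gCC Q p θ 0 :=
  gCC_sup_general Q p θ hp hθ hQθ
end
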